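/- arXiv:2407.16474 — 2 statements merged into one kernel-verified Lean document; each statement's English description precedes it below -/
import Mathlib

section
/- Let j ∈ ℤ, A ≥ 0, n > 2A and f ∈ E_A. Then S_{n,j}f ∈ E_{2A}; that is, there exists a constant K' > 0 such that |(S_{n,j}f)(x)| ≤ K' e^{2Ax} for all x ≥ 0. -/
open MeasureTheory Real Filter

/-- Szász basis function `s_{n,k}(x)` for natural index `k`. -/
noncomputable def szasz (n k : ℕ) (x : ℝ) : ℝ :=
  Real.exp (-(n : ℝ) * x) * ((n : ℝ) * x) ^ k / (Nat.factorial k)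

/-- Szász basis function for integer index, vanishing for negative index. -/
noncomputable def szaszZ (n : ℕ) (k : ℤ) (x : ℝ) : ℝ :=
  if 0 ≤ k then szasz n k.toNat x else 0

/-- The generalized Szász–Mirakjan–Durrmeyer operator `S_{n,j}`. -/
noncomputable def Sop (n : ℕ) (j : ℤ) (f : ℝ → ℝ) (x : ℝ) : ℝ :=
  f 0 * ∑ k ∈ Finset.range j.toNat, szasz n k x
    + ∑' (k : ℕ), szasz n k x *
        ((n : ℝ) * ∫ t in Set.Ioi (0 : ℝ), szaszZ n ((k : ℤ) - j) t * f t)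

/-- Membership in the class `E_A`: locally integrable on `[0,∞)` with exponential growth. -/
def MemE (A : ℝ) (f : ℝ → ℝ) : Prop :=
  MeasureTheory.LocallyIntegrableOn f (Set.Ici 0) ∧
    ∃ K > 0, ∀ t ≥ (0 : ℝ), |f t| ≤ K * Real.exp (A * t)

/-- Falling factorial `a↓r = a(a-1)⋯(a-r+1)` for integer `a`. -/
def ffall (a : ℤ) (r : ℕ) : ℤ := ∏ i ∈ Finset.range r, (a - i)

lemma szasz_nonneg (n k : ℕ) {x : ℝ} (hx : 0 ≤ x) : 0 ≤ szasz n k x := by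
  unfold szasz; positivity

lemma integrableOn_pow_mul_exp_neg (m : ℕ) {b : ℝ} (hb : 0 < b) :
    IntegrableOn (fun t : ℝ => t ^ m * Real.exp (-b * t)) (Set.Ioi 0) := by
  have hs : (-1 : ℝ) < (m : ℝ) := by
    have := Nat.cast_nonneg (α := ℝ) m; linarith
  have h := integrableOn_rpow_mul_exp_neg_mul_rpow (s := (m : ℝ)) (p := 1) hs one_pos hb
  simpa [Real.rpow_one, Real.rpow_natCast] using h

lemma integral_pow_mul_exp_neg (m : ℕ) {b : ℝ} (hb : 0 < b) :
    ∫ t in Set.Ioi (0:ℝ), t ^ m * Real.exp (-b * t) = (Nat.factorial m : ℝ) / b ^ (m + 1) := by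
  have h := Real.integral_rpow_mul_exp_neg_mul_Ioi (a := (m : ℝ) + 1) (r := b)
    (by positivity) hb
  rw [add_sub_cancel_right] at h
  simp_rw [Real.rpow_natCast] at h
  have h2 : ∫ t in Set.Ioi (0:ℝ), t ^ m * Real.exp (-b * t)
      = (1 / b) ^ ((m : ℝ) + 1) * Real.Gamma ((m : ℝ) + 1) := by
    rw [← h]
    refine setIntegral_congr_fun measurableSet_Ioi (fun t ht => ?_)
    rw [neg_mul]
  rw [h2, Real.Gamma_nat_eq_factorial]
  have : ((m : ℝ) + 1) = ((m + 1 : ℕ) : ℝ) := by push_cast; ring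
  rw [this, Real.rpow_natCast]
  rw [one_div, inv_pow]
  ring

lemma integral_bound (n : ℕ) (A K : ℝ) (hA : 0 ≤ A) (hn : A < n) (hK : 0 ≤ K) (f : ℝ → ℝ)
    (hKf : ∀ t ≥ (0:ℝ), |f t| ≤ K * Real.exp (A * t)) (m : ℕ) :
    |(n : ℝ) * ∫ t in Set.Ioi (0:ℝ), szasz n m t * f t|
      ≤ K * ((n : ℝ) / ((n : ℝ) - A)) ^ (m + 1) := by
  have hn0 : (0:ℝ) < n := lt_of_le_of_lt hA hn
  have hb : 0 < (n:ℝ) - A := by linarith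
  set g : ℝ → ℝ := fun t => K * ((n:ℝ) ^ m / (Nat.factorial m : ℝ))
      * (t ^ m * Real.exp (-((n:ℝ) - A) * t)) with hg
  have hgint : IntegrableOn g (Set.Ioi 0) :=
    (integrableOn_pow_mul_exp_neg m hb).const_mul _
  have hbound : ∀ᵐ t ∂(volume.restrict (Set.Ioi (0:ℝ))), ‖szasz n m t * f t‖ ≤ g t := by
    filter_upwards [ae_restrict_mem measurableSet_Ioi] with t ht
    have ht0 : (0:ℝ) ≤ t := le_of_lt ht
    have hsz := szasz_nonneg n m ht0
    have hexp : Real.exp (-((n:ℝ) - A) * t) = Real.exp (-(n:ℝ) * t) * Real.exp (A * t) := by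
      rw [← Real.exp_add]; ring_nf
    calc ‖szasz n m t * f t‖ = szasz n m t * |f t| := by
          rw [norm_mul, Real.norm_eq_abs, Real.norm_eq_abs, abs_of_nonneg hsz]
      _ ≤ szasz n m t * (K * Real.exp (A * t)) := by
          exact mul_le_mul_of_nonneg_left (hKf t ht0) hsz
      _ = g t := by
          simp only [hg, szasz]; rw [hexp]; ring
  have hle := MeasureTheory.norm_integral_le_of_norm_le hgint hbound
  have hig : ∫ t in Set.Ioi (0:ℝ), g t
      = K * ((n:ℝ) ^ m / (Nat.factorial m : ℝ)) * ((Nat.factorial m : ℝ) / ((n:ℝ) - A) ^ (m + 1)) := by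
    simp only [hg]
    rw [MeasureTheory.integral_const_mul, integral_pow_mul_exp_neg m hb]
  have hfac : (0:ℝ) < (Nat.factorial m : ℝ) := by exact_mod_cast Nat.factorial_pos m
  rw [hig] at hle
  rw [abs_mul, abs_of_nonneg hn0.le]
  calc (n:ℝ) * |∫ t in Set.Ioi (0:ℝ), szasz n m t * f t|
      ≤ (n:ℝ) * (K * ((n:ℝ) ^ m / (Nat.factorial m : ℝ))
          * ((Nat.factorial m : ℝ) / ((n:ℝ) - A) ^ (m + 1))) := by
        exact mul_le_mul_of_nonneg_left hle hn0.le
    _ = K * ((n : ℝ) / ((n : ℝ) - A)) ^ (m + 1) := by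
        rw [div_pow]
        field_simp
        ring




lemma exp_tsum (y : ℝ) : ∑' k : ℕ, y ^ k / (Nat.factorial k) = Real.exp y := by
  rw [Real.exp_eq_exp_ℝ, NormedSpace.exp_eq_tsum_div]

/-- `S_{n,j}` maps `E_A` into `E_{2A}` for `n > 2A`. -/
theorem stmt_2 (j : ℤ) (A : ℝ) (hA : 0 ≤ A) (n : ℕ) (hn : 2 * A < n) (f : ℝ → ℝ)
    (hf : MemE A f) :
    ∃ K' > (0 : ℝ), ∀ x ≥ (0 : ℝ), |Sop n j f x| ≤ K' * Real.exp (2 * A * x) := by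
  obtain ⟨hloc, K, hK, hKf⟩ := hf
  have hn0 : (0:ℝ) < n := by linarith
  have hb : 0 < (n:ℝ) - A := by linarith
  set q : ℝ := (n:ℝ) / ((n:ℝ) - A) with hqdef
  have hq0 : 0 < q := div_pos hn0 hb
  have hKq : 0 < K * q ^ ((1:ℤ) - j) := mul_pos hK (zpow_pos hq0 _)
  refine ⟨|f 0| + K * q ^ ((1:ℤ) - j) + 1, by positivity, fun x hx => ?_⟩
  have hex : (1:ℝ) ≤ Real.exp (2 * A * x) := by
    rw [← Real.exp_zero]; exact Real.exp_le_exp.2 (by positivity)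
  set a : ℕ → ℝ := fun k => szasz n k x *
      ((n : ℝ) * ∫ t in Set.Ioi (0 : ℝ), szaszZ n ((k : ℤ) - j) t * f t) with ha
  set b : ℕ → ℝ := fun k =>
      (K * q ^ ((1:ℤ) - j)) * (Real.exp (-(n:ℝ) * x) * ((q * n * x) ^ k / (Nat.factorial k)))
      with hbdef
  have hbnn : ∀ k, 0 ≤ b k := fun k => by
    have : (0:ℝ) ≤ q * n * x := by positivity
    simp only [hbdef]
    positivity
  have hab : ∀ k, |a k| ≤ b k := by
    intro k
    by_cases hkj : 0 ≤ (k:ℤ) - j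
    · set m : ℕ := ((k:ℤ) - j).toNat with hm
      have hmk : (m : ℤ) = (k:ℤ) - j := Int.toNat_of_nonneg hkj
      have hsz : ∀ t : ℝ, szaszZ n ((k:ℤ) - j) t = szasz n m t := fun t => if_pos hkj
      have hIb := integral_bound n A K hA (by linarith) hK.le f hKf m
      have hqpow : q ^ (m + 1) = q ^ ((1:ℤ) - j) * q ^ k := by
        rw [← zpow_natCast q (m + 1), ← zpow_natCast q k, ← zpow_add₀ hq0.ne']
        congr 1
        push_cast
        omega
      have hsznn := szasz_nonneg n k hx
      calc |a k| = szasz n k x *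
            |(n : ℝ) * ∫ t in Set.Ioi (0 : ℝ), szaszZ n ((k : ℤ) - j) t * f t| := by
            rw [ha, abs_mul, abs_of_nonneg hsznn]
        _ ≤ szasz n k x * (K * q ^ (m + 1)) := by
            refine mul_le_mul_of_nonneg_left ?_ hsznn
            simp only [hsz]
            exact hIb
        _ = b k := by
            rw [hqpow, hbdef]
            simp only [szasz]
            rw [mul_assoc q (n:ℝ) x, mul_pow]
            ring
    · have hz : ∀ t : ℝ, szaszZ n ((k:ℤ) - j) t = 0 := fun t => if_neg hkj
      have : a k = 0 := by simp [ha, hz]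
      rw [this, abs_zero]; exact hbnn k
  have hsb : Summable b := by
    rw [hbdef]
    exact ((Real.summable_pow_div_factorial (q * n * x)).mul_left _).mul_left _
  have habs : Summable (fun k => |a k|) :=
    Summable.of_nonneg_of_le (fun k => abs_nonneg _) hab hsb
  have hsa : Summable a := habs.of_abs
  have htsum_b : ∑' k, b k ≤ (K * q ^ ((1:ℤ) - j)) * Real.exp (2 * A * x) := by
    simp only [hbdef]
    rw [tsum_mul_left, tsum_mul_left, exp_tsum, ← Real.exp_add]
    have harg : -(n:ℝ) * x + q * n * x ≤ 2 * A * x := by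
      have hq2 : q * n - n ≤ 2 * A := by
        rw [hqdef]
        rw [div_mul_eq_mul_div, sub_le_iff_le_add, div_le_iff₀ hb]
        nlinarith
      nlinarith
    exact mul_le_mul_of_nonneg_left (Real.exp_le_exp.2 harg) hKq.le
  have htsum : |∑' k, a k| ≤ (K * q ^ ((1:ℤ) - j)) * Real.exp (2 * A * x) := by
    calc |∑' k, a k| ≤ ∑' k, |a k| := by
          have h1 : ‖∑' k, a k‖ ≤ ∑' k, ‖a k‖ :=
            norm_tsum_le_tsum_norm (by simpa only [Real.norm_eq_abs] using habs)
          simpa only [Real.norm_eq_abs] using h1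
      _ ≤ ∑' k, b k := Summable.tsum_le_tsum hab habs hsb
      _ ≤ _ := htsum_b
  have hfin : ∑ k ∈ Finset.range j.toNat, szasz n k x ≤ 1 := by
    have heq : ∑ k ∈ Finset.range j.toNat, szasz n k x
        = Real.exp (-(n:ℝ) * x) * ∑ k ∈ Finset.range j.toNat, ((n:ℝ) * x) ^ k / (Nat.factorial k) := by
      rw [Finset.mul_sum]
      refine Finset.sum_congr rfl fun k _ => ?_
      simp [szasz, mul_div_assoc]
    rw [heq]
    calc Real.exp (-(n:ℝ) * x) * ∑ k ∈ Finset.range j.toNat, ((n:ℝ) * x) ^ k / (Nat.factorial k)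
        ≤ Real.exp (-(n:ℝ) * x) * Real.exp ((n:ℝ) * x) := by
          refine mul_le_mul_of_nonneg_left ?_ (Real.exp_pos _).le
          exact Real.sum_le_exp_of_nonneg (by positivity) _
      _ = 1 := by rw [← Real.exp_add]; simp
  have hfin0 : 0 ≤ ∑ k ∈ Finset.range j.toNat, szasz n k x :=
    Finset.sum_nonneg fun k _ => szasz_nonneg n k hx
  have hSop : |Sop n j f x| ≤ |f 0| * 1 + (K * q ^ ((1:ℤ) - j)) * Real.exp (2 * A * x) := by
    calc |Sop n j f x| ≤ |f 0 * ∑ k ∈ Finset.range j.toNat, szasz n k x| + |∑' k, a k| :=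
          abs_add_le _ _
      _ ≤ |f 0| * 1 + (K * q ^ ((1:ℤ) - j)) * Real.exp (2 * A * x) := by
          refine add_le_add ?_ htsum
          rw [abs_mul, abs_of_nonneg hfin0]
          exact mul_le_mul_of_nonneg_left hfin (abs_nonneg _)
  calc |Sop n j f x| ≤ |f 0| * 1 + (K * q ^ ((1:ℤ) - j)) * Real.exp (2 * A * x) := hSop
    _ ≤ (|f 0| + K * q ^ ((1:ℤ) - j) + 1) * Real.exp (2 * A * x) := by
        nlinarith [abs_nonneg (f 0), hKq, hex, Real.exp_pos (2 * A * x)]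
end

section
/- Let j ∈ ℤ, n ≥ 1 an integer and r ∈ ℕ with r ≥ 1. Then for every x ≥ 0, (S_{n,j}e_r)(x) = ∑_{k=0}^{r} n^{-k} · C(r,k) · (r-j)↓k · x^{r-k} − n^{-r} e^{-nx} ∑_{k=0}^{j-1-r} ((nx)^k/k!) · (k+r-j)↓r, where the second sum is empty (equal to 0) when j-1-r < 0. -/
open MeasureTheory Real Filter

lemma ffall_succ (a : ℤ) (r : ℕ) : ffall a (r+1) = ffall a r * (a - r) := by
  simp [ffall, Finset.prod_range_succ]

lemma ffall_natCast (k m : ℕ) : ffall (k : ℤ) m = (k.descFactorial m : ℤ) := by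
  rcases le_or_gt m k with h | h
  · rw [Nat.descFactorial_eq_prod_range]
    push_cast [ffall]
    exact Finset.prod_congr rfl fun i hi => by
      rw [Nat.cast_sub (le_trans (Finset.mem_range.mp hi).le h)]
  · rw [Nat.descFactorial_eq_zero_iff_lt.mpr h, Nat.cast_zero]
    exact Finset.prod_eq_zero (Finset.mem_range.mpr h) (by simp)

lemma ffall_eq_zero {a : ℤ} {r : ℕ} (h0 : 0 ≤ a) (hr : a < r) : ffall a r = 0 := by
  refine Finset.prod_eq_zero (i := a.toNat) (Finset.mem_range.mpr (by omega)) ?_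
  omega

lemma ffall_add (a b : ℤ) (r : ℕ) :
    ffall (a + b) r
      = ∑ i ∈ Finset.range (r+1), (r.choose i : ℤ) * ffall a i * ffall b (r - i) := by
  induction r with
  | zero => simp [ffall]
  | succ r ih =>
    rw [ffall_succ, ih, Finset.sum_mul]
    have key : ∀ i ∈ Finset.range (r+1),
        (r.choose i : ℤ) * ffall a i * ffall b (r - i) * (a + b - r)
          = (r.choose i : ℤ) * (ffall a (i+1) * ffall b (r - i))
            + (r.choose i : ℤ) * (ffall a i * ffall b (r - i + 1)) := by
      intro i hi
      have hir : i ≤ r := Nat.lt_succ_iff.mp (Finset.mem_range.mp hi)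
      rw [ffall_succ a i, ffall_succ b (r - i)]
      have hc : ((r - i : ℕ) : ℤ) = (r : ℤ) - i := by push_cast [hir]; ring
      rw [hc]; ring
    rw [Finset.sum_congr rfl key, Finset.sum_add_distrib]
    have h1 : ∑ i ∈ Finset.range (r+1), (r.choose i : ℤ) * (ffall a (i+1) * ffall b (r - i))
        = ∑ i ∈ Finset.range r, (r.choose i : ℤ) * (ffall a (i+1) * ffall b (r - i))
          + ffall a (r+1) := by
      rw [Finset.sum_range_succ]; simp [ffall]
    have h2 : ∑ i ∈ Finset.range (r+1), (r.choose i : ℤ) * (ffall a i * ffall b (r - i + 1))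
        = ∑ i ∈ Finset.range r, (r.choose (i+1) : ℤ) * (ffall a (i+1) * ffall b (r - i))
          + ffall b (r+1) := by
      rw [Finset.sum_range_succ']
      congr 1
      · refine Finset.sum_congr rfl fun i hi => ?_
        have : r - (i+1) + 1 = r - i := by
          have := Finset.mem_range.mp hi; omega
        rw [this]
      · simp [ffall]
    rw [h1, h2]
    rw [Finset.sum_range_succ']
    have h3 : ∀ i ∈ Finset.range r,
        ((r+1).choose (i+1) : ℤ) * ffall a (i+1) * ffall b (r + 1 - (i+1))
          = (r.choose i : ℤ) * (ffall a (i+1) * ffall b (r - i))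
            + (r.choose (i+1) : ℤ) * (ffall a (i+1) * ffall b (r - i)) := by
      intro i hi
      have : r + 1 - (i+1) = r - i := by omega
      rw [this, Nat.choose_succ_succ]
      push_cast; ring
    rw [Finset.sum_range_succ, Finset.sum_congr rfl h3, Finset.sum_add_distrib]
    simp [ffall, Finset.prod_range_succ]
    ring

lemma aux_shift (lam : ℝ) (m k : ℕ) :
    lam^(k+m)/(Nat.factorial (k+m)) * (((k+m).descFactorial m : ℕ) : ℝ)
      = lam^m * (lam^k / (Nat.factorial k)) := by
  have h : ((Nat.factorial k : ℕ) : ℝ) * (((k+m).descFactorial m : ℕ) : ℝ)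
      = ((Nat.factorial (k+m) : ℕ) : ℝ) := by
    have h2 : (k+m-m).factorial * (k+m).descFactorial m = (k+m).factorial :=
      Nat.factorial_mul_descFactorial (Nat.le_add_left m k)
    rw [show k + m - m = k by omega] at h2
    exact_mod_cast congrArg (Nat.cast (R := ℝ)) h2
  have hk : ((Nat.factorial k : ℕ) : ℝ) ≠ 0 := by positivity
  have hkm : ((Nat.factorial (k+m) : ℕ) : ℝ) ≠ 0 := by positivity
  field_simp
  rw [← h]; ring

lemma summable_pd (lam : ℝ) (m : ℕ) :
    Summable (fun k : ℕ => lam^k / (Nat.factorial k) * ((k.descFactorial m : ℕ) : ℝ)) := by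
  refine (summable_nat_add_iff m).mp ?_
  simpa [aux_shift] using (Real.summable_pow_div_factorial lam).mul_left (lam^m)

lemma tsum_pd (lam : ℝ) (m : ℕ) :
    ∑' k : ℕ, lam^k / (Nat.factorial k) * ((k.descFactorial m : ℕ) : ℝ)
      = lam^m * Real.exp lam := by
  rw [← Summable.sum_add_tsum_nat_add m (summable_pd lam m)]
  have h0 : ∑ i ∈ Finset.range m,
      lam^i / (Nat.factorial i) * ((i.descFactorial m : ℕ) : ℝ) = 0 := by
    refine Finset.sum_eq_zero fun i hi => ?_
    rw [Nat.descFactorial_eq_zero_iff_lt.mpr (Finset.mem_range.mp hi)]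
    simp
  rw [h0, zero_add]
  have : ∀ k : ℕ, lam^(k+m)/(Nat.factorial (k+m)) * (((k+m).descFactorial m : ℕ) : ℝ)
      = lam^m * (lam^k / (Nat.factorial k)) := fun k => aux_shift lam m k
  rw [tsum_congr this, tsum_mul_left]
  congr 1
  rw [Real.exp_eq_exp_ℝ, NormedSpace.exp_eq_tsum_div]

lemma integral_pow_exp {b : ℝ} (hb : 0 < b) (p : ℕ) :
    ∫ t in Set.Ioi (0:ℝ), t ^ p * Real.exp (-(b * t))
      = (Nat.factorial p : ℝ) / b ^ (p+1) := by
  have h := Real.integral_rpow_mul_exp_neg_mul_Ioi (a := (p:ℝ)+1) (by positivity) hb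
  rw [show ((p:ℝ)+1) - 1 = (p:ℝ) by ring] at h
  have h2 : ∫ t in Set.Ioi (0:ℝ), t ^ p * Real.exp (-(b * t))
      = ∫ t in Set.Ioi (0:ℝ), t ^ ((p:ℝ)) * Real.exp (-(b * t)) := by
    refine setIntegral_congr_fun measurableSet_Ioi fun t ht => ?_
    rw [Real.rpow_natCast]
  rw [h2, h]
  rw [show ((p:ℝ)+1) = ((p+1 : ℕ) : ℝ) by push_cast; ring, Real.rpow_natCast,
    show (((p+1 : ℕ) : ℝ)) = (p:ℝ)+1 by push_cast; ring, Real.Gamma_nat_eq_factorial]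
  rw [one_div, inv_pow]
  field_simp

lemma integral_term (n : ℕ) (hn : 1 ≤ n) (r m : ℕ) :
    (n:ℝ) * ∫ t in Set.Ioi (0:ℝ), szasz n m t * t ^ r
      = (((m+r).descFactorial r : ℕ) : ℝ) / (n:ℝ)^r := by
  have hb : (0:ℝ) < n := by exact_mod_cast hn
  have hnne : (n:ℝ) ≠ 0 := ne_of_gt hb
  have hpt : ∀ t : ℝ, szasz n m t * t ^ r
      = ((n:ℝ)^m / (Nat.factorial m)) * (t ^ (m+r) * Real.exp (-(↑n * t))) := by
    intro t
    simp only [szasz]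
    rw [mul_pow, pow_add, neg_mul]
    ring
  simp_rw [hpt]
  rw [MeasureTheory.integral_const_mul, integral_pow_exp hb (m+r)]
  have h : ((Nat.factorial m : ℕ):ℝ) * (((m+r).descFactorial r : ℕ):ℝ)
      = ((Nat.factorial (m+r) : ℕ):ℝ) := by
    have h2 : (m+r-r).factorial * (m+r).descFactorial r = (m+r).factorial :=
      Nat.factorial_mul_descFactorial (Nat.le_add_left r m)
    rw [show m + r - r = m by omega] at h2
    exact_mod_cast congrArg (Nat.cast (R := ℝ)) h2
  have hm : ((Nat.factorial m : ℕ):ℝ) ≠ 0 := by positivity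
  field_simp
  rw [pow_add, pow_succ]
  linear_combination (-((n:ℝ)^m * (n:ℝ)^r * (n:ℝ))) * h

/-- the moments of the operators `S_{n,j}`. -/
theorem stmt_3 (j : ℤ) (n : ℕ) (hn : 1 ≤ n) (r : ℕ) (hr : 1 ≤ r) (x : ℝ) (hx : 0 ≤ x) :
    Sop n j (fun t => t ^ r) x =
      (∑ k ∈ Finset.range (r + 1),
        (1 / (n : ℝ) ^ k) * (r.choose k : ℝ) * (ffall ((r : ℤ) - j) k : ℝ) * x ^ (r - k))
      - (1 / (n : ℝ) ^ r) * Real.exp (-(n : ℝ) * x) *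
          ∑ k ∈ Finset.range ((j - r).toNat),
            (((n : ℝ) * x) ^ k / (Nat.factorial k)) * (ffall ((k : ℤ) + r - j) r : ℝ) := by
  have hn0 : (0:ℝ) < n := by exact_mod_cast hn
  have hnne : (n:ℝ) ≠ 0 := ne_of_gt hn0
  have hr0 : r ≠ 0 := by omega
  set lam : ℝ := (n:ℝ) * x with hlam
  set N : ℕ := (j - (r:ℤ)).toNat with hN
  set h : ℕ → ℝ := fun k => Real.exp (-(n:ℝ)*x) * lam^k / (Nat.factorial k)
      * ((ffall ((k:ℤ) + ((r:ℤ) - j)) r : ℤ) : ℝ) with hh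
  -- pointwise identity for the summand of the operator
  have hterm : ∀ k : ℕ,
      szasz n k x * ((n:ℝ) * ∫ t in Set.Ioi (0:ℝ), szaszZ n ((k:ℤ) - j) t * t ^ r)
        = (h k - (if k < N then h k else 0)) / (n:ℝ)^r := by
    intro k
    by_cases hkj : j ≤ (k:ℤ)
    · have hk0 : (0:ℤ) ≤ (k:ℤ) - j := by omega
      have hsz : ∀ t : ℝ, szaszZ n ((k:ℤ) - j) t * t ^ r
          = szasz n ((k:ℤ) - j).toNat t * t ^ r := fun t => by
        rw [szaszZ, if_pos hk0]
      simp_rw [hsz]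
      rw [integral_term n hn r ((k:ℤ) - j).toNat]
      have hkN : ¬ (k < N) := by rw [hN]; omega
      rw [if_neg hkN, sub_zero, hh]
      have hcast : ((k:ℤ) + ((r:ℤ) - j)) = ((((k:ℤ) - j).toNat + r : ℕ) : ℤ) := by
        push_cast; omega
      simp only [szasz]
      rw [hcast, ffall_natCast]
      push_cast
      ring
    · have hz : ∀ t : ℝ, szaszZ n ((k:ℤ)-j) t * t ^ r = 0 := by
        intro t; rw [szaszZ, if_neg (show ¬ (0:ℤ) ≤ (k:ℤ) - j by omega), zero_mul]
      simp_rw [hz]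
      rw [integral_zero, mul_zero, mul_zero]
      by_cases hkN : k < N
      · rw [if_pos hkN, sub_self, zero_div]
      · rw [if_neg hkN, sub_zero]
        have hkN' : N ≤ k := Nat.le_of_not_lt hkN
        have h0 : ffall ((k:ℤ) + ((r:ℤ) - j)) r = 0 := by
          refine ffall_eq_zero ?_ ?_
          · rw [hN] at hkN'; omega
          · omega
        rw [hh]
        simp [h0]
  -- Vandermonde expansion of h
  have hsum_eq : ∀ k : ℕ, h k = ∑ i ∈ Finset.range (r+1),
      ((r.choose i : ℝ) * ((ffall ((r:ℤ) - j) i : ℤ):ℝ) * Real.exp (-(n:ℝ)*x))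
        * (lam^k / (Nat.factorial k) * ((k.descFactorial (r-i) : ℕ):ℝ)) := by
    intro k
    have hv : ffall ((k:ℤ) + ((r:ℤ) - j)) r
        = ∑ i ∈ Finset.range (r+1),
            (r.choose i : ℤ) * ffall ((r:ℤ) - j) i * ((k.descFactorial (r-i) : ℕ) : ℤ) := by
      rw [add_comm, ffall_add]
      exact Finset.sum_congr rfl fun i _ => by rw [ffall_natCast]
    rw [hh]
    simp only
    rw [hv]
    push_cast
    rw [Finset.mul_sum]
    exact Finset.sum_congr rfl fun i _ => by ring
  have hSummands : ∀ i ∈ Finset.range (r+1), Summable (fun k : ℕ =>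
      ((r.choose i : ℝ) * ((ffall ((r:ℤ) - j) i : ℤ):ℝ) * Real.exp (-(n:ℝ)*x))
        * (lam^k / (Nat.factorial k) * ((k.descFactorial (r-i) : ℕ):ℝ))) :=
    fun i _ => (summable_pd lam (r-i)).mul_left _
  have hS : Summable h := by
    rw [funext hsum_eq]
    exact summable_sum hSummands
  have htsum_h : ∑' k, h k = ∑ i ∈ Finset.range (r+1),
      (r.choose i:ℝ) * ((ffall ((r:ℤ) - j) i : ℤ):ℝ) * lam^(r-i) := by
    rw [tsum_congr hsum_eq, Summable.tsum_finsetSum hSummands]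
    refine Finset.sum_congr rfl fun i _ => ?_
    rw [tsum_mul_left, tsum_pd]
    have he : Real.exp (-(n:ℝ)*x) * Real.exp lam = 1 := by
      rw [← Real.exp_add, hlam, show -(n:ℝ)*x + (n:ℝ)*x = 0 by ring, Real.exp_zero]
    calc (r.choose i:ℝ) * ((ffall ((r:ℤ) - j) i : ℤ):ℝ) * Real.exp (-(n:ℝ)*x)
          * (lam^(r-i) * Real.exp lam)
        = (r.choose i:ℝ) * ((ffall ((r:ℤ) - j) i : ℤ):ℝ) * lam^(r-i)
            * (Real.exp (-(n:ℝ)*x) * Real.exp lam) := by ring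
      _ = _ := by rw [he, mul_one]
  -- the indicator part
  set ind : ℕ → ℝ := fun k => if k < N then h k else 0 with hind
  have hind0 : ∀ k ∉ Finset.range N, ind k = 0 := by
    intro k hk
    rw [hind]
    simp only
    rw [if_neg (by simpa using hk)]
  have hSind : Summable ind := summable_of_ne_finset_zero hind0
  have htsum_ind : ∑' k, ind k = ∑ k ∈ Finset.range N, h k := by
    rw [tsum_eq_sum hind0]
    refine Finset.sum_congr rfl fun k hk => ?_
    rw [hind]; simp only; rw [if_pos (by simpa using hk)]
  -- assemble
  rw [Sop]
  rw [zero_pow hr0, zero_mul, zero_add]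
  calc (∑' k : ℕ, szasz n k x *
        ((n:ℝ) * ∫ t in Set.Ioi (0:ℝ), szaszZ n ((k:ℤ) - j) t * t ^ r))
      = ∑' k : ℕ, (h k - ind k) / (n:ℝ)^r := by
        exact tsum_congr hterm
    _ = ((∑' k, h k) - ∑' k, ind k) / (n:ℝ)^r := by
        rw [tsum_div_const, Summable.tsum_sub hS hSind]
    _ = _ := by
        rw [htsum_h, htsum_ind, sub_div]
        congr 1
        · rw [Finset.sum_div]
          refine Finset.sum_congr rfl fun i hi => ?_
          have hir : i ≤ r := Nat.lt_succ_iff.mp (Finset.mem_range.mp hi)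
          have hpow : (n:ℝ)^r = (n:ℝ)^(r-i) * (n:ℝ)^i := by
            rw [← pow_add]
            congr 1
            omega
          rw [hlam, mul_pow, hpow]
          field_simp
        · rw [Finset.mul_sum, Finset.sum_div]
          refine Finset.sum_congr rfl fun k hk => ?_
          rw [hh]
          simp only
          rw [show (k:ℤ) + (r:ℤ) - j = (k:ℤ) + ((r:ℤ) - j) by ring]
          field_simp
  done
end
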